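/- For all real numbers h > 0, R_c > 0 and N with 0 < N < 1, one has Φ(h,N,R_c) > (1 − N²)/12; in particular Φ(h,N,R_c) > 0, where Φ(h,N,R_c) = 1/12 + R_c/(4h²(1−N²)) − (1/(4h))·√(N²R_c/(1−N²))·coth(N h √((1−N²)/R_c)). -/

import Mathlib

/-! With `a = N h √((1 − N²)/R_c)` one has `Φ = 1/12 + (N²/(4a²))(1 − a coth a)`, and
`a coth a < 1 + a²/3` for `a > 0`: both `x cosh x − sinh x` and `(1 + x²/3) sinh x − x cosh x`
vanish at `0` and increase on `[0, ∞)`, the derivative of the second being `x/3` times the first.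
Hence `Φ > 1/12 − N²/12`. -/

/-- `coth x = cosh x / sinh x`. -/
noncomputable def cothR (x : ℝ) : ℝ := Real.cosh x / Real.sinh x

/-- The coefficient function `Φ(h,N,R_c)` of the micropolar Reynolds equation. -/
noncomputable def Phi (h N Rc : ℝ) : ℝ :=
  1 / 12 + Rc / (4 * h ^ 2 * (1 - N ^ 2)) -
    (1 / (4 * h)) * Real.sqrt (N ^ 2 * Rc / (1 - N ^ 2)) *
      cothR (N * h * Real.sqrt ((1 - N ^ 2) / Rc))

open Real

lemma pos_of_eq_zero_of_hasDerivAt_pos {f f' : ℝ → ℝ} (hf0 : f 0 = 0)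
    (hf : ∀ y, HasDerivAt f (f' y) y) (hf' : ∀ y, 0 < y → 0 < f' y) {x : ℝ} (hx : 0 < x) :
    0 < f x := by
  have hmono : StrictMonoOn f (Set.Ici 0) :=
    strictMonoOn_of_hasDerivWithinAt_pos (convex_Ici 0)
      (continuous_iff_continuousAt.2 fun y ↦ (hf y).continuousAt).continuousOn
      (fun y _ ↦ (hf y).hasDerivWithinAt)
      (fun y hy ↦ hf' y (by rwa [interior_Ici] at hy))
  simpa [hf0] using hmono Set.self_mem_Ici hx.le hx

lemma sinh_lt_mul_cosh {x : ℝ} (hx : 0 < x) : sinh x < x * cosh x := by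
  have hderiv (y : ℝ) : HasDerivAt (fun y ↦ y * cosh y - sinh y) (y * sinh y) y :=
    (((hasDerivAt_id' y).mul (hasDerivAt_cosh y)).sub (hasDerivAt_sinh y)).congr_deriv (by ring)
  have hpos := pos_of_eq_zero_of_hasDerivAt_pos (by simp) hderiv
    (fun y hy ↦ mul_pos hy (sinh_pos_iff.2 hy)) hx
  linarith

lemma mul_cosh_lt_mul_sinh {x : ℝ} (hx : 0 < x) : x * cosh x < (1 + x ^ 2 / 3) * sinh x := by
  have hderiv (y : ℝ) : HasDerivAt (fun y ↦ (1 + y ^ 2 / 3) * sinh y - y * cosh y)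
      (y / 3 * (y * cosh y - sinh y)) y :=
    ((((hasDerivAt_pow 2 y).div_const 3).const_add 1).mul (hasDerivAt_sinh y)).sub
      ((hasDerivAt_id' y).mul (hasDerivAt_cosh y)) |>.congr_deriv (by ring)
  have hpos := pos_of_eq_zero_of_hasDerivAt_pos (by simp) hderiv
    (fun y hy ↦ mul_pos (by positivity) (sub_pos.2 (sinh_lt_mul_cosh hy))) hx
  linarith

lemma mul_cothR_lt {x : ℝ} (hx : 0 < x) : x * cothR x < 1 + x ^ 2 / 3 := by
  rw [cothR, mul_div_assoc', div_lt_iff₀ (sinh_pos_iff.2 hx)]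
  exact mul_cosh_lt_mul_sinh hx

lemma Phi_eq_one_div_twelve_add_mul_one_sub_mul_cothR {h N Rc a : ℝ} (hh : 0 < h) (hRc : 0 < Rc)
    (hN0 : 0 < N) (hN1 : N < 1) (ha : a = N * h * √((1 - N ^ 2) / Rc)) :
    Phi h N Rc = 1 / 12 + N ^ 2 / (4 * a ^ 2) * (1 - a * cothR a) := by
  have hN2 : 0 < 1 - N ^ 2 := by nlinarith
  set s := √((1 - N ^ 2) / Rc) with hs
  have hs_pos : 0 < s := sqrt_pos.2 (by positivity)
  have hs_sq : Rc * s ^ 2 = 1 - N ^ 2 := by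
    rw [sq_sqrt (by positivity)]
    field_simp
  have hsqrt : √(N ^ 2 * Rc / (1 - N ^ 2)) = N / s := by
    rw [← sqrt_sq (div_pos hN0 hs_pos).le, div_pow, ← hs_sq]
    field_simp
  rw [Phi, hsqrt, ← hs, ← ha, ← hs_sq, ha]
  field_simp
  ring

lemma lt_one_div_twelve_add_mul_one_sub_mul_cothR {N a : ℝ} (hN : N ≠ 0) (ha : 0 < a) :
    (1 - N ^ 2) / 12 < 1 / 12 + N ^ 2 / (4 * a ^ 2) * (1 - a * cothR a) := by
  calc (1 - N ^ 2) / 12 = 1 / 12 + N ^ 2 / (4 * a ^ 2) * (-(a ^ 2 / 3)) := by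
        field_simp
        ring
    _ < 1 / 12 + N ^ 2 / (4 * a ^ 2) * (1 - a * cothR a) := by
        gcongr
        linarith [mul_cothR_lt ha]

/-- Strict positivity of the Reynolds coefficient:
`Φ(h,N,R_c) > (1 − N²)/12 > 0` for `h, R_c > 0` and `0 < N < 1`. -/
theorem Phi_pos (h Rc N : ℝ) (hh : 0 < h) (hRc : 0 < Rc)
    (hN0 : 0 < N) (hN1 : N < 1) :
    (1 - N ^ 2) / 12 < Phi h N Rc ∧ 0 < Phi h N Rc := by
  have hN2 : 0 < 1 - N ^ 2 := by nlinarith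
  have ha : 0 < N * h * √((1 - N ^ 2) / Rc) := by positivity
  have hlower : (1 - N ^ 2) / 12 < Phi h N Rc := by
    rw [Phi_eq_one_div_twelve_add_mul_one_sub_mul_cothR hh hRc hN0 hN1 rfl]
    exact lt_one_div_twelve_add_mul_one_sub_mul_cothR hN0.ne' ha
  exact ⟨hlower, lt_trans (by positivity) hlower⟩
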